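/- arXiv:math/0409534 — 2 statements merged into one kernel-verified Lean document; each statement's English description precedes it below -/
import Mathlib

section
/- For any harmonic polynomial g and any polynomial f in ℂ[z_1,...,z_n], and any l ≥ 1: Δ^l(g f) = Σ_{k=0}^l 2^k·C(l,k)·Σ_{s ∈ ℕ^n, |s| = k} (k!/s!)·(∂^k g/∂z^s)·(∂^k Δ^{l-k} f/∂z^s). -/
open MvPolynomial

/-- The Laplace operator on polynomials in `n` variables. -/
noncomputable def lap {n : ℕ} (P : MvPolynomial (Fin n) ℂ) : MvPolynomial (Fin n) ℂ :=
  ∑ i, pderiv i (pderiv i P)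

/-- The mixed partial derivative `∂^{|s|}/∂z^s` for a multi-index `s`. -/
noncomputable def pderivMulti {n : ℕ} (s : Fin n → ℕ)
    (P : MvPolynomial (Fin n) ℂ) : MvPolynomial (Fin n) ℂ :=
  (List.finRange n).foldr (fun i Q => (pderiv i)^[s i] Q) P

/-- The multi-indices of total degree `k` (as a finite set). -/
noncomputable def multiIndices (n k : ℕ) : Finset (Fin n → ℕ) :=
  (Fintype.piFinset fun _ : Fin n => Finset.range (k + 1)).filter fun s => ∑ i, s i = k

/-! Let `μ : V ⊗ V → V` be the multiplication of `V = ℂ[z₁, …, zₙ]` and `D = ∑ᵢ ∂ᵢ ⊗ ∂ᵢ`.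
Leibniz's rule reads `Δ ∘ μ = μ ∘ (Δ ⊗ 1 + 2 D + 1 ⊗ Δ)`, and the three summands commute, so
`Δ^l (g f) = μ ((Δ ⊗ 1 + 2 D + 1 ⊗ Δ)^l (g ⊗ f))`. Since `(Δ ⊗ 1) (g ⊗ f) = 0`, that summand drops
out; the binomial theorem expands `(2 D + 1 ⊗ Δ)^l`, and the multinomial theorem expands
`D^k = ∑_{|s| = k} (k! / s!) ∂^s ⊗ ∂^s`. -/

open TensorProduct

namespace MvPolynomial

variable {R σ : Type*} [CommSemiring R]

theorem pderiv_pderiv_comm (i j : σ) (p : MvPolynomial σ R) :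
    pderiv i (pderiv j p) = pderiv j (pderiv i p) := by
  classical
  induction p using MvPolynomial.induction_on with
  | C a => simp
  | add p q hp hq => simp [hp, hq]
  | mul_X p k ih =>
    simp only [Derivation.leibniz, pderiv_X, Pi.single_apply, apply_ite, smul_eq_mul, mul_one,
      mul_zero, map_add, map_zero, ih, add_zero]
    split_ifs <;> abel

theorem commute_pderiv (i j : σ) :
    Commute (pderiv (R := R) i).toLinearMap (pderiv j).toLinearMap :=
  LinearMap.ext (pderiv_pderiv_comm i j)

noncomputable def pderivPow [Fintype σ] (s : σ → ℕ) : Module.End R (MvPolynomial σ R) :=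
  Finset.univ.noncommProd (fun i => (pderiv i).toLinearMap ^ s i)
    fun i _ j _ _ => (commute_pderiv i j).pow_pow _ _

end MvPolynomial

namespace TensorProduct

variable {R M N : Type*} [CommSemiring R] [AddCommMonoid M] [Module R M] [AddCommMonoid N]
  [Module R N]

variable (R M) in
def mapSelfHom : Module.End R M →* Module.End R (M ⊗[R] M) where
  toFun f := map f f
  map_one' := TensorProduct.map_one
  map_mul' f g := TensorProduct.map_mul f g f g

theorem commute_map {f₁ f₂ : Module.End R M} {g₁ g₂ : Module.End R N} (hf : Commute f₁ f₂)
    (hg : Commute g₁ g₂) : Commute (map f₁ g₁) (map f₂ g₂) := by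
  rw [Commute, SemiconjBy, ← TensorProduct.map_mul, ← TensorProduct.map_mul, hf.eq, hg.eq]

end TensorProduct

theorem Commute.add_pow_apply_of_apply_eq_zero {R M : Type*} [Semiring R] [AddCommMonoid M]
    [Module R M] {a b : Module.End R M} (h : Commute a b) {x : M} (hx : a x = 0) (l : ℕ) :
    ((a + b) ^ l) x = (b ^ l) x := by
  induction l with
  | zero => rfl
  | succ l ih =>
    rw [pow_succ', Module.End.mul_apply, ih, LinearMap.add_apply, ← Module.End.mul_apply a,
      (h.pow_right l).eq, Module.End.mul_apply, hx, map_zero, zero_add, ← Module.End.mul_apply,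
      ← pow_succ']

variable {n : ℕ}

theorem pderivMulti_eq_pderivPow (s : Fin n → ℕ) (P : MvPolynomial (Fin n) ℂ) :
    pderivMulti s P = pderivPow s P := by
  simp only [pderivPow, Finset.noncommProd, Fin.univ_val_map, Multiset.noncommProd_coe,
    List.ofFn_eq_map, pderivMulti]
  induction List.finRange n with
  | nil => rfl
  | cons j L ih => simp [ih, Module.End.pow_apply]

theorem multiIndices_eq_piAntidiag (k : ℕ) : multiIndices n k = Finset.univ.piAntidiag k := by
  ext s
  simp only [multiIndices, Finset.mem_filter, Fintype.mem_piFinset, Finset.mem_range,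
    Finset.mem_piAntidiag, Finset.mem_univ, implies_true, and_true, and_iff_right_iff_imp]
  rintro rfl i
  exact Nat.lt_succ_of_le (Finset.single_le_sum (fun j _ => Nat.zero_le (s j)) (Finset.mem_univ i))

theorem lap_mul (P Q : MvPolynomial (Fin n) ℂ) :
    lap (P * Q) = lap P * Q + P * lap Q + 2 * ∑ i, pderiv i P * pderiv i Q := by
  simp only [lap, pderiv_mul, map_add, Finset.mul_sum, Finset.sum_mul, ← Finset.sum_add_distrib]
  exact Finset.sum_congr rfl fun i _ => by ring

noncomputable def lapEnd : Module.End ℂ (MvPolynomial (Fin n) ℂ) :=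
  ∑ i, (pderiv i).toLinearMap * (pderiv i).toLinearMap

theorem coe_lapEnd : ⇑(lapEnd (n := n)) = lap := by
  ext1 P
  simp [lapEnd, lap]

theorem commute_lapEnd_pderiv (j : Fin n) : Commute lapEnd (pderiv j).toLinearMap :=
  Commute.sum_left _ _ _ fun i _ =>
    (MvPolynomial.commute_pderiv i j).mul_left (MvPolynomial.commute_pderiv i j)

noncomputable def mixedLap : Module.End ℂ (MvPolynomial (Fin n) ℂ ⊗[ℂ] MvPolynomial (Fin n) ℂ) :=
  ∑ i, mapSelfHom ℂ _ (pderiv i).toLinearMap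

noncomputable def diagLap :
    Module.End ℂ (MvPolynomial (Fin n) ℂ ⊗[ℂ] MvPolynomial (Fin n) ℂ) :=
  TensorProduct.map lapEnd 1 + (2 • mixedLap + TensorProduct.map 1 lapEnd)

theorem semiconj_mul'_diagLap_lapEnd :
    Function.Semiconj (LinearMap.mul' ℂ (MvPolynomial (Fin n) ℂ)) diagLap lapEnd := by
  have h : LinearMap.mul' ℂ _ ∘ₗ diagLap = lapEnd ∘ₗ LinearMap.mul' ℂ (MvPolynomial (Fin n) ℂ) := by
    refine TensorProduct.ext' fun P Q => ?_
    simp only [diagLap, mixedLap, LinearMap.comp_apply, LinearMap.add_apply, LinearMap.smul_apply,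
      LinearMap.sum_apply, map_add, map_nsmul, map_sum, map_tmul, mapSelfHom,
      MonoidHom.coe_mk, OneHom.coe_mk, LinearMap.mul'_apply, coe_lapEnd, Module.End.one_apply,
      lap_mul]
    simp only [nsmul_eq_mul, Finset.mul_sum]
    push_cast
    ring
  exact fun x => LinearMap.congr_fun h x

theorem commute_map_lapEnd_one_mixedLap :
    Commute (TensorProduct.map lapEnd 1) (mixedLap (n := n)) :=
  Commute.sum_right _ _ _ fun i _ => commute_map (commute_lapEnd_pderiv i) (Commute.one_left _)

theorem commute_mixedLap_map_one_lapEnd :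
    Commute (mixedLap (n := n)) (TensorProduct.map 1 lapEnd) :=
  Commute.sum_left _ _ _ fun i _ => commute_map (Commute.one_right _) (commute_lapEnd_pderiv i).symm

theorem diagLap_pow_apply_tmul {g : MvPolynomial (Fin n) ℂ} (hg : lap g = 0)
    (f : MvPolynomial (Fin n) ℂ) (l : ℕ) :
    (diagLap ^ l) (g ⊗ₜ f) =
      ∑ k ∈ Finset.range (l + 1), (2 ^ k * l.choose k) • (mixedLap ^ k) (g ⊗ₜ lap^[l - k] f) := by
  have hcomm : Commute (TensorProduct.map (lapEnd (n := n)) 1)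
      (2 • mixedLap + TensorProduct.map 1 lapEnd) :=
    (commute_map_lapEnd_one_mixedLap.smul_right 2).add_right
      (commute_map (Commute.one_right _) (Commute.one_left _))
  have hg' : TensorProduct.map lapEnd (1 : Module.End ℂ (MvPolynomial (Fin n) ℂ)) (g ⊗ₜ f) = 0 := by
    simp [coe_lapEnd, hg]
  rw [diagLap, hcomm.add_pow_apply_of_apply_eq_zero hg',
    (commute_mixedLap_map_one_lapEnd.smul_left 2).add_pow, LinearMap.sum_apply]
  refine Finset.sum_congr rfl fun k _ => ?_
  simp only [smul_pow, TensorProduct.map_pow, one_pow, Module.End.mul_apply,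
    Module.End.natCast_apply, LinearMap.smul_apply, map_nsmul, map_tmul, Module.End.one_apply,
    Module.End.pow_apply, coe_lapEnd, smul_smul, mul_comm]

theorem mixedLap_pow (k : ℕ) :
    mixedLap (n := n) ^ k = ∑ s ∈ Finset.univ.piAntidiag k,
      (Nat.multinomial Finset.univ s : Module.End ℂ _) * mapSelfHom ℂ _ (pderivPow s) := by
  rw [mixedLap, Finset.sum_pow_eq_sum_piAntidiag_of_commute _ _
    fun i _ j _ _ => (MvPolynomial.commute_pderiv i j).map _]
  refine Finset.sum_congr rfl fun s _ => ?_
  rw [pderivPow]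
  congr 1
  exact ((Finset.map_noncommProd _ _ _ _).trans
    (Finset.noncommProd_congr rfl (fun i _ => map_pow _ _ _) _)).symm

theorem mul'_mixedLap_pow_tmul (k : ℕ) (P Q : MvPolynomial (Fin n) ℂ) :
    LinearMap.mul' ℂ _ ((mixedLap ^ k) (P ⊗ₜ Q)) =
      ∑ s ∈ multiIndices n k, ((k.factorial / ∏ i, (s i).factorial : ℕ) : MvPolynomial (Fin n) ℂ) *
        (pderivMulti s P * pderivMulti s Q) := by
  rw [mixedLap_pow, multiIndices_eq_piAntidiag, LinearMap.sum_apply, map_sum]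
  refine Finset.sum_congr rfl fun s hs => ?_
  rw [Finset.mem_piAntidiag] at hs
  simp only [Module.End.mul_apply, Module.End.natCast_apply, map_nsmul, mapSelfHom,
    MonoidHom.coe_mk, OneHom.coe_mk, map_tmul, LinearMap.mul'_apply]
  simp only [nsmul_eq_mul, pderivMulti_eq_pderivPow, Nat.multinomial, hs.1]

theorem lap_iterate_mul_of_lap_eq_zero {g : MvPolynomial (Fin n) ℂ} (hg : lap g = 0)
    (f : MvPolynomial (Fin n) ℂ) (l : ℕ) :
    lap^[l] (g * f) =
      ∑ k ∈ Finset.range (l + 1), ((2 ^ k * l.choose k : ℕ) : MvPolynomial (Fin n) ℂ) *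
        LinearMap.mul' ℂ _ ((mixedLap ^ k) (g ⊗ₜ lap^[l - k] f)) := by
  have h := semiconj_mul'_diagLap_lapEnd.iterate_right l (g ⊗ₜ f)
  rw [coe_lapEnd, LinearMap.mul'_apply] at h
  rw [← h, ← Module.End.pow_apply, diagLap_pow_apply_tmul hg, map_sum]
  simp_rw [map_nsmul, nsmul_eq_mul]

theorem lap_pow_mul_harmonic_expansion_general {n : ℕ} (g f : MvPolynomial (Fin n) ℂ)
    (hg : lap g = 0) (l : ℕ) :
    lap^[l] (g * f) =
      ∑ k ∈ Finset.range (l + 1),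
        ((2 ^ k * Nat.choose l k : ℕ) : MvPolynomial (Fin n) ℂ) *
          ∑ s ∈ multiIndices n k,
            ((Nat.factorial k / ∏ i, Nat.factorial (s i) : ℕ) : MvPolynomial (Fin n) ℂ) *
              (pderivMulti s g * pderivMulti s (lap^[l - k] f)) := by
  simp only [lap_iterate_mul_of_lap_eq_zero hg, mul'_mixedLap_pow_tmul]

theorem lap_pow_mul_harmonic_expansion {n : ℕ} (g f : MvPolynomial (Fin n) ℂ)
    (hg : lap g = 0) (l : ℕ) (hl : 1 ≤ l) :
    lap^[l] (g * f) =
      ∑ k ∈ Finset.range (l + 1),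
        ((2 ^ k * Nat.choose l k : ℕ) : MvPolynomial (Fin n) ℂ) *
          ∑ s ∈ multiIndices n k,
            ((Nat.factorial k / ∏ i, Nat.factorial (s i) : ℕ) : MvPolynomial (Fin n) ℂ) *
              (pderivMulti s g * pderivMulti s (lap^[l - k] f)) :=
  lap_pow_mul_harmonic_expansion_general g f hg l
end

section
/- Let P ∈ ℂ[z_1,...,z_n] be a Hessian nilpotent polynomial (so Δ^k(Δ^m P^{m+1}) = Δ^{m+k} P^{m+1} for iterated Laplacians). The following are equivalent: (1) for every k ≥ 1 there exists M such that Δ^m P^{m+k} = 0 for all m > M; (2) there exists k_0 ≥ 1 and M_0 such that Δ^m P^{m+k_0} = 0 for all m > M_0; (3) there exists M such that Δ^m P^{m+1} = 0 for all m > M. (For the implication (3) ⇒ (1), one may use that the generating series Q_t = Σ_{m≥1} (1/(2^{m-1} m! (m-1)!)) Δ^{m-1} P^m t^{m-1} satisfies Q_t^k = k! Σ_{m≥0} (t^m/(2^m m! (m+k)!)) Δ^m P^{m+k} for all k ≥ 1.) -/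
open MvPolynomial

/-- The Hessian matrix of a polynomial. -/
noncomputable def hess {n : ℕ} (P : MvPolynomial (Fin n) ℂ) :
    Matrix (Fin n) (Fin n) (MvPolynomial (Fin n) ℂ) :=
  Matrix.of fun i j => pderiv i (pderiv j P)

/-!
Let `Q` be the formal power series in `t` with coefficients in `ℂ[z]` solving `2 ∂ₜQ = ∇Q·∇Q`,
`Q(0) = P`; it is the series `Q_t` of the statement. Differentiating the equation twice, the
Hessian `H` of `Q` satisfies the Riccati equation `(∂ₜ - ∇Q·∇) H = H²`, hence
`(∂ₜ - ∇Q·∇) tr Hᵏ = k tr Hᵏ⁺¹`. As the traces of the powers of `H(0) = Hess P` vanish, induction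
on the order in `t` shows that every `tr Hᵏ` with `k ≥ 1` vanishes; in particular `ΔQ = tr H = 0`.
Then `Δ(Qᵏ⁺¹) = 2(k+1) ∂ₜ(Qᵏ)`, and by induction on `m`,
`Δᵐ Pᵐ⁺ᵏ = 2ᵐ m! (m+k)! / k! · [tᵐ] Qᵏ`.

So (3) says that `Q` is a polynomial in `t`, hence so is every `Qᵏ`, which is (1); and (2) implies
(3) because `Δᵐ⁺¹ Pᵐ⁺¹⁺ᵏ = Δ (Δᵐ Pᵐ⁺⁽ᵏ⁺¹⁾)`.
-/

open PowerSeries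

namespace Derivation

variable {R A : Type*} [CommSemiring R] [CommRing A] [Algebra R A]

noncomputable def mapPowerSeries (d : Derivation R A A) : Derivation R A⟦X⟧ A⟦X⟧ :=
  .mk' { toFun f := PowerSeries.mk fun n => d (coeff n f)
         map_add' f g := by ext; simp
         map_smul' r f := by ext; simp } fun f g => by
    ext n
    simp only [LinearMap.coe_mk, AddHom.coe_mk, coeff_mk, PowerSeries.coeff_mul, map_sum, map_add,
      leibniz, smul_eq_mul, Finset.sum_add_distrib]
    rw [← Finset.Nat.sum_antidiagonal_swap (f := fun p => g.coeff p.1 * _)]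
    simp [mul_comm]

@[simp]
lemma coeff_mapPowerSeries (d : Derivation R A A) (f : A⟦X⟧) (n : ℕ) :
    coeff n (d.mapPowerSeries f) = d (coeff n f) := by
  simp [mapPowerSeries]

lemma constantCoeff_mapPowerSeries (d : Derivation R A A) (f : A⟦X⟧) :
    constantCoeff (d.mapPowerSeries f) = d (constantCoeff f) := by
  rw [← coeff_zero_eq_constantCoeff_apply, ← coeff_zero_eq_constantCoeff_apply,
    coeff_mapPowerSeries]

lemma mapPowerSeries_comm {d₁ d₂ : Derivation R A A} (h : ∀ a, d₁ (d₂ a) = d₂ (d₁ a))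
    (f : A⟦X⟧) :
    d₁.mapPowerSeries (d₂.mapPowerSeries f) = d₂.mapPowerSeries (d₁.mapPowerSeries f) := by
  ext n
  simp [h]

lemma derivative_mapPowerSeries (d : Derivation R A A) (f : A⟦X⟧) :
    d⁄dX A (d.mapPowerSeries f) = d.mapPowerSeries (d⁄dX A f) := by
  ext n
  rw [coeff_derivative, coeff_mapPowerSeries, coeff_mapPowerSeries, coeff_derivative, leibniz,
    ← Nat.cast_succ, map_natCast, smul_zero, zero_add, smul_eq_mul, mul_comm]

lemma X_pow_dvd_mapPowerSeries (d : Derivation R A A) {f : A⟦X⟧} {a : ℕ}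
    (hf : PowerSeries.X ^ a ∣ f) : PowerSeries.X ^ a ∣ d.mapPowerSeries f := by
  rw [X_pow_dvd_iff] at hf ⊢
  intro m hm
  simp [hf m hm]

lemma finset_sum_apply {M ι : Type*} [AddCommMonoid M] [Module A M] [Module R M] (s : Finset ι)
    (D : ι → Derivation R A M) (a : A) : (∑ i ∈ s, D i) a = ∑ i ∈ s, D i a := by
  rw [← coeFnAddMonoidHom_apply, map_sum, Finset.sum_apply]
  rfl

end Derivation

lemma MvPolynomial.pderiv_pderiv_comm_s17 {R σ : Type*} [CommSemiring R] (i j : σ)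
    (p : MvPolynomial σ R) : pderiv i (pderiv j p) = pderiv j (pderiv i p) := by
  classical
  induction p using MvPolynomial.induction_on with
  | C a => simp
  | add p q hp hq => simp [hp, hq]
  | mul_X p k hp =>
    simp only [Derivation.leibniz, pderiv_X, Pi.single_apply, smul_eq_mul, map_add, hp,
      apply_ite (pderiv _), Derivation.map_one_eq_zero, map_zero, ite_self]
    ring

namespace Matrix

variable {R A l m n : Type*} [CommSemiring R] [CommRing A] [Algebra R A] [Fintype m]

lemma map_derivation_mul (δ : Derivation R A A) (M : Matrix l m A) (N : Matrix m n A) :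
    (M * N).map δ = M.map δ * N + M * N.map δ := by
  ext i j
  simp [mul_apply, Finset.sum_add_distrib, mul_comm, add_comm]

lemma map_derivation_pow_of_map_eq_mul_self [DecidableEq m] (δ : Derivation R A A)
    {M : Matrix m m A} (hM : M.map δ = M * M) (k : ℕ) : (M ^ k).map δ = k • M ^ (k + 1) := by
  induction k with
  | zero => ext i j; simp [one_apply, apply_ite δ]
  | succ k ih =>
    rw [pow_succ, map_derivation_mul, ih, hM, smul_mul_assoc, ← pow_succ, ← mul_assoc,
      ← pow_succ, ← pow_succ, succ_nsmul]

end Matrix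

namespace PowerSeries

variable {A : Type*}

lemma X_pow_succ_dvd_of_dvd_derivative [CommRing A] [IsDomain A] [CharZero A] {f : A⟦X⟧} {a : ℕ}
    (h0 : constantCoeff f = 0) (h : X ^ a ∣ d⁄dX A f) : X ^ (a + 1) ∣ f := by
  rw [X_pow_dvd_iff] at h ⊢
  rintro (_ | m) hm
  · simpa using h0
  · have hm := h m (by omega)
    rw [coeff_derivative] at hm
    exact (mul_eq_zero.mp hm).resolve_right (Nat.cast_add_one_ne_zero m)

lemma eq_zero_of_derivative_eq [CommRing A] [IsDomain A] [CharZero A] {T : ℕ → A⟦X⟧}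
    (c : ℕ → A⟦X⟧) (G : A⟦X⟧ → A⟦X⟧) (hG : ∀ a f, X ^ a ∣ f → X ^ a ∣ G f)
    (h0 : ∀ k, constantCoeff (T k) = 0) (hT : ∀ k, d⁄dX A (T k) = c k * T (k + 1) + G (T k))
    (k : ℕ) : T k = 0 := by
  have hdvd : ∀ a k, X ^ a ∣ T k := by
    intro a
    induction a with
    | zero => simp
    | succ a ih =>
      refine fun k => X_pow_succ_dvd_of_dvd_derivative (h0 k) ?_
      rw [hT]
      exact dvd_add (dvd_mul_of_dvd_right (ih _) _) (hG _ _ (ih k))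
  ext a
  simpa using X_pow_dvd_iff.mp (hdvd (a + 1) k) a (by omega)

lemma coeff_pow_eq_zero_of_coeff_eq_zero [CommSemiring A] {f : A⟦X⟧} {M : ℕ}
    (hf : ∀ m, M < m → coeff m f = 0) {k m : ℕ} (hm : k * M < m) : coeff m (f ^ k) = 0 := by
  have htrunc : f = trunc (M + 1) f := by
    ext m
    rw [Polynomial.coeff_coe, coeff_trunc]
    split_ifs with h
    · rfl
    · exact hf m (by omega)
  rw [htrunc, ← Polynomial.coe_pow, Polynomial.coeff_coe]
  refine Polynomial.coeff_eq_zero_of_natDegree_lt (Polynomial.natDegree_pow_le.trans_lt ?_)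
  have := natDegree_trunc_lt f M
  nlinarith

end PowerSeries

section BurgersFlow

open Finset

variable {σ K : Type*} [Field K]

-- `𝒟 i` is `∂/∂zᵢ` acting coefficientwise on power series in `t = X`.
local notation:max "𝒟" i:max => Derivation.mapPowerSeries (pderiv (R := K) i)

lemma mapPowerSeries_pderiv_comm (i j : σ) (f : (MvPolynomial σ K)⟦X⟧) :
    𝒟 i (𝒟 j f) = 𝒟 j (𝒟 i f) :=
  Derivation.mapPowerSeries_comm (pderiv_pderiv_comm_s17 i j) f

noncomputable def hessianSeries (Q : (MvPolynomial σ K)⟦X⟧) :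
    Matrix σ σ (MvPolynomial σ K)⟦X⟧ :=
  .of fun i j => 𝒟 i (𝒟 j Q)

lemma map_constantCoeff_hessianSeries (Q : (MvPolynomial σ K)⟦X⟧) :
    (hessianSeries Q).map constantCoeff = .of fun i j => pderiv i (pderiv j (constantCoeff Q)) := by
  ext i j
  simp [hessianSeries, Derivation.constantCoeff_mapPowerSeries]

variable [Fintype σ]

noncomputable def laplacianSeries (Q : (MvPolynomial σ K)⟦X⟧) : (MvPolynomial σ K)⟦X⟧ :=
  ∑ i, 𝒟 i (𝒟 i Q)

noncomputable def materialDeriv (Q : (MvPolynomial σ K)⟦X⟧) :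
    Derivation K (MvPolynomial σ K)⟦X⟧ (MvPolynomial σ K)⟦X⟧ :=
  (d⁄dX (MvPolynomial σ K)).restrictScalars K - ∑ l, 𝒟 l Q • 𝒟 l

lemma materialDeriv_apply (Q f : (MvPolynomial σ K)⟦X⟧) :
    materialDeriv Q f = d⁄dX _ f - ∑ l, 𝒟 l Q * 𝒟 l f := by
  simp [materialDeriv, Derivation.finset_sum_apply]

lemma hessianSeries_map_materialDeriv [CharZero K] {Q : (MvPolynomial σ K)⟦X⟧}
    (hQ : 2 • d⁄dX _ Q = ∑ l, 𝒟 l Q * 𝒟 l Q) :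
    (hessianSeries Q).map (materialDeriv Q) = hessianSeries Q * hessianSeries Q := by
  refine Matrix.ext fun i j => ?_
  have h := congr(𝒟 i (𝒟 j $hQ))
  simp only [map_nsmul, map_sum, map_add, Derivation.leibniz, smul_eq_mul,
    ← Derivation.derivative_mapPowerSeries] at h
  apply smul_right_injective _ (two_ne_zero : (2 : K) ≠ 0)
  simp only [Matrix.map_apply, hessianSeries, Matrix.of_apply, materialDeriv_apply,
    Matrix.mul_apply, smul_sub, smul_sum, ofNat_smul_eq_nsmul (R := K), h, ← sum_sub_distrib]
  refine sum_congr rfl fun l _ => ?_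
  -- used as an ordered rewrite, this brings all mixed partial derivatives to one normal form
  simp only [mapPowerSeries_pderiv_comm]
  ring

lemma derivative_trace_hessianSeries_pow [CharZero K] [DecidableEq σ] {Q : (MvPolynomial σ K)⟦X⟧}
    (hQ : 2 • d⁄dX _ Q = ∑ l, 𝒟 l Q * 𝒟 l Q) (k : ℕ) :
    d⁄dX _ (hessianSeries Q ^ (k + 1)).trace =
      (k + 1 : ℕ) * (hessianSeries Q ^ (k + 2)).trace +
        ∑ l, 𝒟 l Q * 𝒟 l (hessianSeries Q ^ (k + 1)).trace := by
  have h := congr(Matrix.trace $(Matrix.map_derivation_pow_of_map_eq_mul_self (materialDeriv Q)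
    (hessianSeries_map_materialDeriv hQ) (k + 1)))
  rw [← AddMonoidHom.map_trace, materialDeriv_apply, Matrix.trace_smul, sub_eq_iff_eq_add] at h
  rw [h, nsmul_eq_mul]

lemma trace_hessianSeries_pow_eq_zero [CharZero K] [DecidableEq σ] {Q : (MvPolynomial σ K)⟦X⟧}
    (hQ : 2 • d⁄dX _ Q = ∑ l, 𝒟 l Q * 𝒟 l Q)
    (hN : IsNilpotent (Matrix.of fun i j => pderiv i (pderiv j (constantCoeff Q)))) (k : ℕ) :
    (hessianSeries Q ^ (k + 1)).trace = 0 := by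
  refine eq_zero_of_derivative_eq (T := fun k => (hessianSeries Q ^ (k + 1)).trace)
    (fun k => (k + 1 : ℕ)) (fun f => ∑ l, 𝒟 l Q * 𝒟 l f) (fun a f hf => ?_) (fun k => ?_)
    (derivative_trace_hessianSeries_pow hQ) k
  · exact dvd_sum fun l _ => (Derivation.X_pow_dvd_mapPowerSeries _ hf).mul_left _
  · rw [AddMonoidHom.map_trace, Matrix.map_pow, map_constantCoeff_hessianSeries]
    exact (Matrix.isNilpotent_trace_of_isNilpotent (hN.pow_succ k)).eq_zero

lemma laplacianSeries_eq_zero [CharZero K] [DecidableEq σ] {Q : (MvPolynomial σ K)⟦X⟧}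
    (hQ : 2 • d⁄dX _ Q = ∑ l, 𝒟 l Q * 𝒟 l Q)
    (hN : IsNilpotent (Matrix.of fun i j => pderiv i (pderiv j (constantCoeff Q)))) :
    laplacianSeries Q = 0 := by
  simpa [laplacianSeries, Matrix.trace, hessianSeries] using
    trace_hessianSeries_pow_eq_zero hQ hN 0

lemma laplacianSeries_pow {Q : (MvPolynomial σ K)⟦X⟧}
    (hQ : 2 • d⁄dX _ Q = ∑ l, 𝒟 l Q * 𝒟 l Q) (hΔ : laplacianSeries Q = 0) (k : ℕ) :
    laplacianSeries (Q ^ (k + 1)) = (2 * (k + 1)) • d⁄dX _ (Q ^ k) := by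
  have hgrad : ∀ i, 𝒟 i (Q ^ (k + 1)) = (k + 1) • (Q ^ k * 𝒟 i Q) := by
    simp [Derivation.leibniz_pow]
  have hpair : ∑ i, 𝒟 i (Q ^ k) * 𝒟 i Q = 2 • d⁄dX _ (Q ^ k) := by
    simp only [Derivation.leibniz_pow, smul_eq_mul, smul_mul_assoc, mul_assoc, ← smul_sum,
      ← mul_sum, ← hQ]
    ring
  calc laplacianSeries (Q ^ (k + 1))
      = (k + 1) • (∑ i, 𝒟 i (Q ^ k) * 𝒟 i Q + Q ^ k * laplacianSeries Q) := by
        simp only [laplacianSeries, hgrad, map_nsmul, Derivation.leibniz, smul_eq_mul, mul_sum,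
          ← sum_add_distrib, smul_sum]
        exact sum_congr rfl fun i _ => by ring
    _ = (2 * (k + 1)) • d⁄dX _ (Q ^ k) := by
        rw [hpair, hΔ, mul_zero, add_zero, smul_smul, mul_comm]

noncomputable def burgersCoeff (P : MvPolynomial σ K) : ℕ → MvPolynomial σ K
  | 0 => P
  | a + 1 => (2 * (a + 1) : K)⁻¹ • ∑ p ∈ (antidiagonal a).attach,
      ∑ l, pderiv l (burgersCoeff P p.1.1) * pderiv l (burgersCoeff P p.1.2)
decreasing_by all_goals (have := mem_antidiagonal.mp p.2; omega)

noncomputable def burgersSeries (P : MvPolynomial σ K) : (MvPolynomial σ K)⟦X⟧ :=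
  .mk (burgersCoeff P)

lemma constantCoeff_burgersSeries (P : MvPolynomial σ K) :
    constantCoeff (burgersSeries P) = P := by
  rw [← coeff_zero_eq_constantCoeff_apply, burgersSeries, coeff_mk, burgersCoeff]

lemma smul_burgersCoeff_succ [CharZero K] (P : MvPolynomial σ K) (a : ℕ) :
    (2 * (a + 1) : K) • burgersCoeff P (a + 1) =
      ∑ p ∈ antidiagonal a, ∑ l, pderiv l (burgersCoeff P p.1) * pderiv l (burgersCoeff P p.2) := by
  rw [burgersCoeff, smul_inv_smul₀ (mul_ne_zero two_ne_zero (Nat.cast_add_one_ne_zero a)),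
    sum_attach (antidiagonal a) fun p =>
      ∑ l, pderiv l (burgersCoeff P p.1) * pderiv l (burgersCoeff P p.2)]

lemma two_nsmul_derivative_burgersSeries [CharZero K] (P : MvPolynomial σ K) :
    2 • d⁄dX _ (burgersSeries P) = ∑ l, 𝒟 l (burgersSeries P) * 𝒟 l (burgersSeries P) := by
  ext1 a
  simp only [map_nsmul, coeff_derivative, map_sum, PowerSeries.coeff_mul,
    Derivation.coeff_mapPowerSeries, burgersSeries, coeff_mk]
  rw [sum_comm, ← smul_burgersCoeff_succ]
  simp [Algebra.smul_def, map_ofNat]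
  ring

end BurgersFlow

section Laplacian

variable {n : ℕ}

lemma lap_zero : lap (0 : MvPolynomial (Fin n) ℂ) = 0 := by
  simp [lap]

lemma lap_smul (c : ℂ) (f : MvPolynomial (Fin n) ℂ) : lap (c • f) = c • lap f := by
  simp [lap, Finset.smul_sum]

lemma coeff_laplacianSeries (f : (MvPolynomial (Fin n) ℂ)⟦X⟧) (m : ℕ) :
    coeff m (laplacianSeries f) = lap (coeff m f) := by
  simp [laplacianSeries, lap]

open Nat in
lemma lap_iterate_pow_eq_smul_coeff {P : MvPolynomial (Fin n) ℂ} (hHN : IsNilpotent (hess P))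
    (m k : ℕ) :
    lap^[m] (P ^ (m + k)) = (2 ^ m * m ! * (m + k)! / k ! : ℂ) • coeff m (burgersSeries P ^ k) := by
  have hQ := two_nsmul_derivative_burgersSeries P
  have hΔ : laplacianSeries (burgersSeries P) = 0 :=
    laplacianSeries_eq_zero hQ (by rwa [constantCoeff_burgersSeries])
  induction m generalizing k with
  | zero =>
    simp [coeff_zero_eq_constantCoeff_apply, constantCoeff_burgersSeries, Nat.factorial_ne_zero]
  | succ m ih =>
    have hc : (2 ^ m * m ! * (m + (k + 1))! / (k + 1)! : ℂ) * (2 * (k + 1) * (m + 1)) =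
        2 ^ (m + 1) * (m + 1)! * (m + (k + 1))! / k ! := by
      rw [Nat.factorial_succ k, Nat.factorial_succ m]
      push_cast
      field_simp
      ring
    rw [Function.iterate_succ_apply', show m + 1 + k = m + (k + 1) by ring, ih, lap_smul,
      ← coeff_laplacianSeries, laplacianSeries_pow hQ hΔ, map_nsmul, coeff_derivative, ← hc,
      nsmul_eq_mul]
    simp only [Algebra.smul_def, map_mul, map_add, map_ofNat, map_natCast, map_one]
    push_cast
    ring

lemma lap_iterate_pow_eq_zero_iff {P : MvPolynomial (Fin n) ℂ} (hHN : IsNilpotent (hess P))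
    (m k : ℕ) : lap^[m] (P ^ (m + k)) = 0 ↔ coeff m (burgersSeries P ^ k) = 0 := by
  rw [lap_iterate_pow_eq_smul_coeff hHN, smul_eq_zero, or_iff_right]
  simp [Nat.factorial_ne_zero]

lemma lap_iterate_pow_eq_zero_of_succ {P : MvPolynomial (Fin n) ℂ} {k M : ℕ}
    (h : ∀ m, M < m → lap^[m] (P ^ (m + (k + 1))) = 0) (m : ℕ) (hm : M + 1 < m) :
    lap^[m] (P ^ (m + k)) = 0 := by
  obtain ⟨m, rfl⟩ : ∃ m', m = m' + 1 := ⟨m - 1, by omega⟩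
  rw [Function.iterate_succ_apply', show m + 1 + k = m + (k + 1) by ring, h m (by omega),
    lap_zero]

lemma lap_iterate_pow_add_one_eq_zero_of_succ {P : MvPolynomial (Fin n) ℂ} {k M : ℕ}
    (h : ∀ m, M < m → lap^[m] (P ^ (m + (k + 1))) = 0) (m : ℕ) (hm : M + k < m) :
    lap^[m] (P ^ (m + 1)) = 0 := by
  induction k generalizing M with
  | zero => exact h m hm
  | succ k ih => exact ih (lap_iterate_pow_eq_zero_of_succ h) (by omega)

end Laplacian

theorem vanishing_equivalences {n : ℕ} (P : MvPolynomial (Fin n) ℂ)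
    (hHN : IsNilpotent (hess P)) :
    ((∀ k : ℕ, 1 ≤ k → ∃ M : ℕ, ∀ m : ℕ, M < m → lap^[m] (P ^ (m + k)) = 0) ↔
        (∃ k₀ : ℕ, 1 ≤ k₀ ∧ ∃ M₀ : ℕ, ∀ m : ℕ, M₀ < m → lap^[m] (P ^ (m + k₀)) = 0)) ∧
      ((∃ k₀ : ℕ, 1 ≤ k₀ ∧ ∃ M₀ : ℕ, ∀ m : ℕ, M₀ < m → lap^[m] (P ^ (m + k₀)) = 0) ↔
        (∃ M : ℕ, ∀ m : ℕ, M < m → lap^[m] (P ^ (m + 1)) = 0)) := by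
  have descent :
      (∃ k₀ : ℕ, 1 ≤ k₀ ∧ ∃ M₀ : ℕ, ∀ m : ℕ, M₀ < m → lap^[m] (P ^ (m + k₀)) = 0) →
        ∃ M : ℕ, ∀ m : ℕ, M < m → lap^[m] (P ^ (m + 1)) = 0 := by
    rintro ⟨k₀, hk₀, M₀, h⟩
    obtain ⟨k, rfl⟩ := Nat.exists_eq_add_of_le' hk₀
    exact ⟨M₀ + k, lap_iterate_pow_add_one_eq_zero_of_succ h⟩
  have ascent : (∃ M : ℕ, ∀ m : ℕ, M < m → lap^[m] (P ^ (m + 1)) = 0) →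
      ∀ k : ℕ, 1 ≤ k → ∃ M : ℕ, ∀ m : ℕ, M < m → lap^[m] (P ^ (m + k)) = 0 := by
    rintro ⟨M, h⟩ k -
    have hQ : ∀ m, M < m → coeff m (burgersSeries P) = 0 := fun m hm => by
      simpa using (lap_iterate_pow_eq_zero_iff hHN m 1).mp (h m hm)
    exact ⟨k * M, fun m hm =>
      (lap_iterate_pow_eq_zero_iff hHN m k).mpr (coeff_pow_eq_zero_of_coeff_eq_zero hQ hm)⟩
  exact ⟨⟨fun h => ⟨1, le_rfl, h 1 le_rfl⟩, ascent ∘ descent⟩, ⟨descent, fun h => ⟨1, le_rfl, h⟩⟩⟩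
end
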